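/- arXiv:1906.06053 — 2 statements merged into one kernel-verified Lean document; each statement's English description precedes it below -/
import Mathlib

section
/- Let f(w) = c(‖Aw‖₂² + wᵀb + 1) for a constant c > 0, a symmetric matrix A ∈ ℝ^{d×d} and b ∈ ℝ^d, and suppose the set S* of minimizers of f is nonempty. Then for every w ∈ ℝ^d, writing w* for the Euclidean projection of w onto S*, one has f(w) − f(w*) = c‖Aw − Aw*‖₂². Consequently, if λ_min⁺(A²) denotes the smallest nonzero eigenvalue of A², then f(w) − f(w*) ≥ c·λ_min⁺(A²)·‖w − w*‖₂². -/
open scoped RealInnerProductSpace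

/-- If `0 ≤ t^2*K + t*α` for all `t`, with `0 ≤ K`, then `α = 0`. -/
lemma quad_aux (K α : ℝ) (hK : 0 ≤ K) (h : ∀ t : ℝ, 0 ≤ t ^ 2 * K + t * α) : α = 0 := by
  by_contra hα
  have hK1 : (0:ℝ) < K + 1 := by linarith
  have h1 := h (-α / (K + 1))
  have h2 : (-α / (K + 1)) ^ 2 * K + (-α / (K + 1)) * α = -α ^ 2 / (K + 1) ^ 2 := by
    field_simp
    ring
  rw [h2] at h1
  have h5 : (0:ℝ) < (K + 1) ^ 2 := by positivity
  have h6 := (le_div_iff₀ h5).mp h1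
  have h7 : 0 < α ^ 2 := by positivity
  nlinarith

theorem stmt_3 {d : ℕ} (c : ℝ) (hc : 0 < c) (A : Matrix (Fin d) (Fin d) ℝ) (hA : A.IsSymm)
    (b : EuclideanSpace ℝ (Fin d)) (μ : ℝ)
    (f : EuclideanSpace ℝ (Fin d) → ℝ)
    (hf : ∀ w, f w = c * (‖Matrix.toEuclideanLin A w‖ ^ 2 + ⟪w, b⟫ + 1))
    (S : Set (EuclideanSpace ℝ (Fin d)))
    (hS : S = {u | ∀ y, f u ≤ f y}) (hne : S.Nonempty)
    (hμ : ∀ v : EuclideanSpace ℝ (Fin d),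
      v ∈ (LinearMap.ker (Matrix.toEuclideanLin (A * A)))ᗮ →
        μ * ‖v‖ ^ 2 ≤ ‖Matrix.toEuclideanLin A v‖ ^ 2)
    (w wstar : EuclideanSpace ℝ (Fin d)) (hws : wstar ∈ S)
    (hproj : ∀ y ∈ S, ‖w - wstar‖ ≤ ‖w - y‖) :
    f w - f wstar = c * ‖Matrix.toEuclideanLin A w - Matrix.toEuclideanLin A wstar‖ ^ 2 ∧
    f w - f wstar ≥ c * μ * ‖w - wstar‖ ^ 2 := by
  set T := Matrix.toEuclideanLin A with hT
  -- symmetry of T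
  have hHerm : A.IsHermitian := by
    rw [Matrix.IsHermitian, Matrix.conjTranspose]
    ext i j
    simp [Matrix.IsSymm.apply hA]
  have hsym : ∀ x y : EuclideanSpace ℝ (Fin d), ⟪T x, y⟫ = ⟪x, T y⟫ :=
    Matrix.isHermitian_iff_isSymmetric.mp hHerm
  -- expansion of f along a line
  have hexp : ∀ (v : EuclideanSpace ℝ (Fin d)) (t : ℝ),
      f (wstar + t • v) = f wstar +
        c * (t ^ 2 * ‖T v‖ ^ 2 + t * (2 * ⟪T v, T wstar⟫ + ⟪v, b⟫)) := by
    intro v t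
    rw [hf, hf]
    have h1 : T (wstar + t • v) = T wstar + t • T v := by
      rw [map_add, map_smul]
    rw [h1, inner_add_left, real_inner_smul_left]
    rw [norm_add_sq_real, real_inner_smul_right, norm_smul]
    simp only [Real.norm_eq_abs, mul_pow, sq_abs]
    rw [real_inner_comm (T wstar) (T v)]
    ring
  have hwsS : ∀ y, f wstar ≤ f y := by rw [hS] at hws; exact hws
  -- first-order optimality
  have key : ∀ v : EuclideanSpace ℝ (Fin d), 2 * ⟪T v, T wstar⟫ + ⟪v, b⟫ = 0 := by
    intro v
    apply quad_aux (‖T v‖ ^ 2) _ (by positivity)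
    intro t
    have h1 := hwsS (wstar + t • v)
    rw [hexp v t] at h1
    have h2 : 0 ≤ c * (t ^ 2 * ‖T v‖ ^ 2 + t * (2 * ⟪T v, T wstar⟫ + ⟪v, b⟫)) := by linarith
    nlinarith [h2, hc, mul_pos hc hc]
  -- first claim
  have hTsub : ‖T w - T wstar‖ ^ 2 = ‖T w‖ ^ 2 - 2 * ⟪T w, T wstar⟫ + ‖T wstar‖ ^ 2 := by
    rw [norm_sub_sq_real]
  have claim1 : f w - f wstar = c * ‖T w - T wstar‖ ^ 2 := by
    have keyw := key (w - wstar)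
    simp only [map_sub, inner_sub_left, real_inner_self_eq_norm_sq] at keyw
    rw [hf, hf, hTsub]
    linear_combination c * keyw
  refine ⟨claim1, ?_⟩
  -- orthogonality of w - wstar to ker (A*A)
  have hker : ∀ u, Matrix.toEuclideanLin (A * A) u = T (T u) := by
    intro u
    rw [hT, Matrix.toEuclideanLin_apply, Matrix.toEuclideanLin_apply,
      Matrix.toEuclideanLin_apply]
    simp [Matrix.mulVec_mulVec]
  have hmemS : ∀ u ∈ LinearMap.ker (Matrix.toEuclideanLin (A * A)), wstar + u ∈ S := by
    intro u hu
    have hTu : T u = 0 := by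
      have h0 : T (T u) = 0 := by rw [← hker u]; exact hu
      have h2 : ‖T u‖ ^ 2 = 0 := by
        rw [← real_inner_self_eq_norm_sq, hsym, h0, inner_zero_right]
      exact norm_eq_zero.mp (pow_eq_zero_iff two_ne_zero |>.mp h2)
    rw [hS]
    intro y
    have := hexp u 1
    rw [one_smul] at this
    rw [this, key u, hTu]
    simpa using hwsS y
  have horth : w - wstar ∈ (LinearMap.ker (Matrix.toEuclideanLin (A * A)))ᗮ := by
    rw [Submodule.mem_orthogonal]
    intro u hu
    have hzero : ⟪w - wstar, u⟫ = 0 := by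
      have hq : (-2 * ⟪w - wstar, u⟫ : ℝ) = 0 := by
        apply quad_aux (‖u‖ ^ 2) _ (by positivity)
        intro t
        have htu : (t • u) ∈ LinearMap.ker (Matrix.toEuclideanLin (A * A)) :=
          Submodule.smul_mem _ t hu
        have h1 := hproj (wstar + t • u) (hmemS _ htu)
        have h2 : w - (wstar + t • u) = (w - wstar) - t • u := by abel
        rw [h2] at h1
        have h3 : ‖w - wstar‖ ^ 2 ≤ ‖(w - wstar) - t • u‖ ^ 2 :=
          pow_le_pow_left₀ (norm_nonneg _) h1 2
        have h4 : ‖(w - wstar) - t • u‖ ^ 2 =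
            ‖w - wstar‖ ^ 2 - 2 * (t * ⟪w - wstar, u⟫) + t ^ 2 * ‖u‖ ^ 2 := by
          rw [norm_sub_sq_real, real_inner_smul_right, norm_smul]
          simp only [Real.norm_eq_abs, mul_pow, sq_abs]
        rw [h4] at h3
        nlinarith
      linarith
    rw [real_inner_comm] at hzero
    exact hzero
  have hlow := hμ (w - wstar) horth
  rw [map_sub] at hlow
  rw [claim1]
  have := mul_le_mul_of_nonneg_left hlow hc.le
  linarith
end

section
/- Let (η_t) be a positive nonincreasing sequence with η_t ≤ 1/(2C) for C > 0, and suppose nonnegative reals b_t and a_t (with a_1 = 0) satisfy a_{t+1} − a_t ≤ 2η_t(Cη_t −1) b_t + η_t/2 + 2η_t² A. Then ∑_{k=1}^t η_k² b_k ≤ (A/C + 1/2) ∑_{k=1}^t η_k². -/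
/-! Multiplying the per-step inequality `η_t b_t ≤ a_t - a_{t+1} + c η_t` by `η_t` and using
`η_{t+1} a_{t+1} ≤ η_t a_{t+1}` makes the right-hand side telescope in `η_t a_t`. -/

open Finset

theorem mul_le_sub_add_of_step_le {C A η a a' b : ℝ} (hC : 0 < C) (hA : 0 ≤ A) (hb : 0 ≤ b)
    (hη : 0 ≤ η) (hηC : η ≤ 1 / (2 * C))
    (h : a' - a ≤ 2 * η * (C * η - 1) * b + η / 2 + 2 * η ^ 2 * A) :
    η * b ≤ a - a' + (A / C + 1 / 2) * η := by
  have hηC' : 2 * C * η ≤ 1 := by rwa [le_div_iff₀' (by positivity)] at hηC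
  have descent : 2 * η * (C * η - 1) * b ≤ -(η * b) := by
    nlinarith [mul_nonneg hη hb]
  have noise : 2 * η ^ 2 * A ≤ A / C * η := by
    rw [div_mul_eq_mul_div, le_div_iff₀ hC]
    nlinarith [mul_nonneg hη hA]
  linarith

theorem sum_sq_mul_add_le_of_step_le {m : ℕ} {c : ℝ} {a b η : ℕ → ℝ}
    (ha : ∀ t, m ≤ t → 0 ≤ a (t + 1)) (hη : ∀ t, m ≤ t → 0 ≤ η t)
    (hmono : ∀ t, m ≤ t → η (t + 1) ≤ η t)
    (hstep : ∀ t, m ≤ t → η t * b t ≤ a t - a (t + 1) + c * η t) :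
    ∀ n, m ≤ n →
      ∑ k ∈ Icc m n, η k ^ 2 * b k + η n * a (n + 1) ≤ η m * a m + c * ∑ k ∈ Icc m n, η k ^ 2 := by
  have weighted : ∀ t, m ≤ t →
      η t ^ 2 * b t ≤ η t * a t - η t * a (t + 1) + c * η t ^ 2 := fun t ht => by
    nlinarith [mul_le_mul_of_nonneg_left (hstep t ht) (hη t ht)]
  intro n hn
  induction n, hn using Nat.le_induction with
  | base =>
    simp only [Icc_self, sum_singleton]
    linarith [weighted m le_rfl]
  | succ n hn ih =>
    rw [sum_Icc_succ_top (by omega), sum_Icc_succ_top (by omega)]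
    have hshift : η (n + 1) * a (n + 1) ≤ η n * a (n + 1) :=
      mul_le_mul_of_nonneg_right (hmono n hn) (ha n hn)
    linarith [weighted (n + 1) (by omega)]

theorem stmt_7 (C A : ℝ) (hC : 0 < C) (hA : 0 ≤ A)
    (a b η : ℕ → ℝ)
    (ha : ∀ t, 1 ≤ t → 0 ≤ a t) (hb : ∀ t, 1 ≤ t → 0 ≤ b t)
    (hη : ∀ t, 1 ≤ t → 0 < η t) (hmono : ∀ t, 1 ≤ t → η (t + 1) ≤ η t)
    (hbound : ∀ t, 1 ≤ t → η t ≤ 1 / (2 * C))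
    (hrec : ∀ t, 1 ≤ t →
      a (t + 1) - a t ≤ 2 * η t * (C * η t - 1) * b t + η t / 2 + 2 * η t ^ 2 * A)
    (ha1 : a 1 = 0) :
    ∀ t, 1 ≤ t →
      ∑ k ∈ Finset.Icc 1 t, η k ^ 2 * b k ≤ (A / C + 1 / 2) * ∑ k ∈ Finset.Icc 1 t, η k ^ 2 := by
  intro t ht
  have ha' : ∀ t, 1 ≤ t → 0 ≤ a (t + 1) := fun t ht => ha (t + 1) (by omega)
  have hη' : ∀ t, 1 ≤ t → 0 ≤ η t := fun t ht => (hη t ht).le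
  have telescoped := sum_sq_mul_add_le_of_step_le ha' hη' hmono
    (fun t ht => mul_le_sub_add_of_step_le hC hA (hb t ht) (hη' t ht) (hbound t ht) (hrec t ht))
    t ht
  rw [ha1, mul_zero, zero_add] at telescoped
  linarith [mul_nonneg (hη' t ht) (ha' t ht)]
end
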